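/- Let q > 0 and let P be a q-stable finite multiset of vectors admitting a proper decomposition into components P₁ and P₂ (both spans nonzero, spans linearly independent). Then the number of nonzero vectors of P (with multiplicity) is at least dim(span P) + 2q, in particular strictly greater than dim(span P) + q. -/

import Mathlib

open scoped Classical

/-- The linear span of (the set of elements of) a multiset of vectors. -/
def mSpan (F : Type*) {V : Type*} [Field F] [AddCommGroup V] [Module F V]
    (P : Multiset V) : Submodule F V :=
  Submodule.span F {x | x ∈ P}

/-- A finite multiset `P` of vectors is `q`-stable if its linear span is unchanged after
removing any at most `q` vectors (counted with multiplicity). -/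
def QStable (F : Type*) {V : Type*} [Field F] [AddCommGroup V] [Module F V]
    (q : ℕ) (P : Multiset V) : Prop :=
  ∀ S : Multiset V, S ≤ P → Multiset.card S ≤ q → mSpan F (P - S) = mSpan F P

/-- The number of nonzero vectors of a multiset, with multiplicity. -/
noncomputable def nnz {V : Type*} [Zero V] (P : Multiset V) : ℕ :=
  Multiset.card (Multiset.filter (fun v => v ≠ 0) P)

/-! Each component inherits `q`-stability: the spans being independent, the other component
cannot make up for a loss of span. In a `q`-stable `Pᵢ` with nonzero span, removing `q` nonzero
vectors leaves the span unchanged, so `nnz Pᵢ - q` vectors span it and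
`dim span Pᵢ + q ≤ nnz Pᵢ`. Summing over both components and using
`dim span P ≤ dim span P₁ + dim span P₂` gives `dim span P + 2q ≤ nnz P`. -/

theorem Multiset.exists_le_card_eq {α : Type*} {s : Multiset α} {n : ℕ}
    (h : n ≤ Multiset.card s) : ∃ t ≤ s, Multiset.card t = n := by
  obtain ⟨t, ht⟩ := Multiset.card_pos_iff_exists_mem.1
    (by rw [Multiset.card_powersetCard]; exact Nat.choose_pos h : 0 < card (powersetCard n s))
  exact ⟨t, Multiset.mem_powersetCard.1 ht⟩

theorem nnz_add {V : Type*} [Zero V] (A B : Multiset V) : nnz (A + B) = nnz A + nnz B := by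
  simp only [nnz, Multiset.filter_add, Multiset.card_add]

section mSpan

variable {F V : Type*} [Field F] [AddCommGroup V] [Module F V]

instance (P : Multiset V) : FiniteDimensional F (mSpan F P) :=
  FiniteDimensional.span_of_finite F P.finite_toSet

theorem mSpan_zero : mSpan F (0 : Multiset V) = ⊥ := by
  simp [mSpan]

theorem mSpan_add (A B : Multiset V) : mSpan F (A + B) = mSpan F A ⊔ mSpan F B := by
  simp only [mSpan, ← Submodule.span_union, Multiset.mem_add]
  rfl

theorem mSpan_mono {A B : Multiset V} (h : A ≤ B) : mSpan F A ≤ mSpan F B :=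
  Submodule.span_mono fun _ hx => Multiset.mem_of_le h hx

theorem mSpan_filter_ne_zero (P : Multiset V) :
    mSpan F (P.filter (· ≠ 0)) = mSpan F P := by
  refine le_antisymm (mSpan_mono (Multiset.filter_le _ _)) (Submodule.span_le.2 fun x hx => ?_)
  by_cases hx0 : x = 0
  · simp [hx0]
  · exact Submodule.subset_span (Multiset.mem_filter.2 ⟨hx, hx0⟩)

theorem mSpan_sub_filter_ne_zero (P : Multiset V) : mSpan F (P - P.filter (· ≠ 0)) = ⊥ := by
  simp_rw [← mSpan_filter_ne_zero (P := P - _), Multiset.filter_sub, Multiset.filter_filter,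
    and_self, tsub_self, mSpan_zero]

theorem finrank_mSpan_le_card (P : Multiset V) :
    Module.finrank F (mSpan F P) ≤ Multiset.card P := by
  have hspan : mSpan F P = Submodule.span F (P.toFinset : Set V) := by
    rw [mSpan]
    congr 1
    ext x
    simp
  rw [hspan]
  exact (finrank_span_finset_le_card P.toFinset).trans P.toFinset_card_le

theorem finrank_mSpan_add_le (A B : Multiset V) :
    Module.finrank F (mSpan F (A + B)) ≤
      Module.finrank F (mSpan F A) + Module.finrank F (mSpan F B) :=
  mSpan_add (F := F) A B ▸ Submodule.finrank_add_le_finrank_add_finrank _ _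

theorem finrank_mSpan_sub_le {P S : Multiset V} (hS : S ≤ P.filter (· ≠ 0)) :
    Module.finrank F (mSpan F (P - S)) ≤ nnz P - Multiset.card S := by
  have hS_nonzero : S.filter (· ≠ 0) = S :=
    Multiset.filter_eq_self.2 fun x hx => (Multiset.mem_filter.1 (Multiset.mem_of_le hS hx)).2
  calc Module.finrank F (mSpan F (P - S))
      = Module.finrank F (mSpan F ((P - S).filter (· ≠ 0))) := by rw [mSpan_filter_ne_zero]
    _ ≤ Multiset.card ((P - S).filter (· ≠ 0)) := finrank_mSpan_le_card _
    _ = nnz P - Multiset.card S := by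
      rw [Multiset.filter_sub, hS_nonzero, Multiset.card_sub hS]
      rfl

namespace QStable

variable {q : ℕ}

theorem left_of_disjoint {P R : Multiset V} (h : QStable F q (P + R))
    (hd : Disjoint (mSpan F P) (mSpan F R)) : QStable F q P := by
  intro S hS hcard
  have hsup := h S (hS.trans (Multiset.le_add_right _ _)) hcard
  rw [← tsub_add_eq_add_tsub hS, mSpan_add, mSpan_add] at hsup
  refine eq_of_le_of_inf_le_of_sup_le (z := mSpan F R) (mSpan_mono tsub_le_self) ?_ hsup.ge
  rw [hd.eq_bot]
  exact bot_le

theorem le_nnz {P : Multiset V} (h : QStable F q P) (hne : mSpan F P ≠ ⊥) : q ≤ nnz P := by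
  by_contra! hlt
  rw [← h _ (Multiset.filter_le _ _) hlt.le, mSpan_sub_filter_ne_zero] at hne
  exact hne rfl

theorem finrank_add_le_nnz {P : Multiset V} (h : QStable F q P) (hne : mSpan F P ≠ ⊥) :
    Module.finrank F (mSpan F P) + q ≤ nnz P := by
  have hq := h.le_nnz hne
  obtain ⟨S, hS, hcard⟩ := Multiset.exists_le_card_eq hq
  have hrank := finrank_mSpan_sub_le (F := F) hS
  rw [h S (hS.trans (Multiset.filter_le _ _)) hcard.le, hcard] at hrank
  omega

end QStable

end mSpan

theorem stmt_4_general {F V : Type*} [Field F] [AddCommGroup V] [Module F V]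
    (q : ℕ) (hq : 0 < q) (P P₁ P₂ : Multiset V) (hP : QStable F q P) (hsum : P = P₁ + P₂)
    (h₁ : mSpan F P₁ ≠ ⊥) (h₂ : mSpan F P₂ ≠ ⊥)
    (hdisj : Disjoint (mSpan F P₁) (mSpan F P₂)) :
    Module.finrank F (mSpan F P) + 2 * q ≤ nnz P ∧
      Module.finrank F (mSpan F P) + q < nnz P := by
  subst hsum
  have hb₁ := (hP.left_of_disjoint hdisj).finrank_add_le_nnz h₁
  have hb₂ := ((add_comm P₁ P₂ ▸ hP).left_of_disjoint hdisj.symm).finrank_add_le_nnz h₂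
  have hrank := finrank_mSpan_add_le (F := F) P₁ P₂
  rw [nnz_add]
  omega

/-- If `q > 0` and a `q`-stable multiset `P` admits a proper decomposition into two
components (both spans nonzero and linearly independent), then the number of nonzero
vectors of `P` is at least `dim (span P) + 2q`, in particular strictly greater than
`dim (span P) + q`. -/
theorem stmt_4 {F V : Type*} [Field F] [AddCommGroup V] [Module F V] [FiniteDimensional F V]
    (q : ℕ) (hq : 0 < q) (P P₁ P₂ : Multiset V) (hP : QStable F q P) (hsum : P = P₁ + P₂)
    (h₁ : mSpan F P₁ ≠ ⊥) (h₂ : mSpan F P₂ ≠ ⊥)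
    (hdisj : Disjoint (mSpan F P₁) (mSpan F P₂)) :
    Module.finrank F (mSpan F P) + 2 * q ≤ nnz P ∧
      Module.finrank F (mSpan F P) + q < nnz P :=
  stmt_4_general q hq P P₁ P₂ hP hsum h₁ h₂ hdisj
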